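/- Harnack chain lower bound in Lipschitz cylinders: For every δ ∈ (0, 1/2) there exists a constant c ∈ (0,1), depending only on n, λ, Λ, L and δ, such that the following holds. Let A be uniformly elliptic on C_1 and let w ∈ C²(C_1) satisfy tr(A D²w) = 0 in C_1. If w ≥ −1 on C_1 and w ≥ M on A_1 := C_1 \ C(1, δ) for some M > 0, then w(x₀) ≥ (M + 1)c − 1 for every x₀ ∈ A_{1/2} := C_{1/2} \ C(1/2, δ/2). -/

import Mathlib

open MeasureTheory Metric Filter

noncomputable section

/-- `ℝ^n` with the Euclidean norm. -/
abbrev Eucl (n : ℕ) : Type := EuclideanSpace ℝ (Fin n)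

/-- Uniform ellipticity of the coefficient matrix `A` on `Ω`:
`λ|ξ|² ≤ ξ·(A(x)ξ)` and `|A(x)ξ| ≤ Λ|ξ|`. -/
def UnifElliptic {n : ℕ} (lam Lam : ℝ) (Ω : Set (Eucl n))
    (A : Eucl n → Matrix (Fin n) (Fin n) ℝ) : Prop :=
  ∀ x ∈ Ω, ∀ ξ : Eucl n,
    lam * ‖ξ‖ ^ 2 ≤ ∑ i, ξ i * ∑ j, A x i j * ξ j ∧
    Real.sqrt (∑ i, (∑ j, A x i j * ξ j) ^ 2) ≤ Lam * ‖ξ‖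

/-- `u` is a `C²` solution of `tr(A D²u) = 0` on the open set `Ω`. -/
def NondivSolution {n : ℕ} (A : Eucl n → Matrix (Fin n) (Fin n) ℝ) (Ω : Set (Eucl n))
    (u : Eucl n → ℝ) : Prop :=
  ContDiffOn ℝ 2 u Ω ∧ ∀ x ∈ Ω,
    ∑ i, ∑ j, A x i j *
      fderiv ℝ (fun y => fderiv ℝ u y (EuclideanSpace.single i 1)) x
        (EuclideanSpace.single j 1) = 0

/-- The first `d` coordinates of a point in `ℝ^{d+1}`. -/
def ehead {d : ℕ} (x : Eucl (d + 1)) : Eucl d := WithLp.toLp 2 (fun i : Fin d => x i.castSucc)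

/-- The last coordinate of a point in `ℝ^{d+1}`. -/
def elast {d : ℕ} (x : Eucl (d + 1)) : ℝ := x (Fin.last d)

/-- `h_Γ(x) = x_n - g(x')`. -/
def hG {d : ℕ} (g : Eucl d → ℝ) (x : Eucl (d + 1)) : ℝ := elast x - g (ehead x)

/-- The cylindrical region `C(r,ρ) = {|x'| < r, 0 < h_Γ(x) < ρ}` above the graph of `g`. -/
def cylC {d : ℕ} (g : Eucl d → ℝ) (r ρ : ℝ) : Set (Eucl (d + 1)) :=
  {x | ‖ehead x‖ < r ∧ 0 < hG g x ∧ hG g x < ρ}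

/-- `u` vanishes continuously on the part of the graph `Γ` with `|x₀'| < r`,
as a function on `Ω`. -/
def VanishesOnGraph {d : ℕ} (g : Eucl d → ℝ) (r : ℝ) (Ω : Set (Eucl (d + 1)))
    (u : Eucl (d + 1) → ℝ) : Prop :=
  ∀ x₀ : Eucl (d + 1), ‖ehead x₀‖ < r → elast x₀ = g (ehead x₀) →
    Tendsto u (nhdsWithin x₀ Ω) (nhds 0)

/-- The point `e_n / 2`. -/
def enHalf (d : ℕ) : Eucl (d + 1) := (1 / 2 : ℝ) • EuclideanSpace.single (Fin.last d) 1

/-!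
The solution `w` is compared, on annuli `r < |x - z| < 4r`, with barriers built from
`|x - z|^{-2q}`. For `q` large in terms of `n, λ, Λ` this function is a strict subsolution of
every operator `tr(A D²·)` with ellipticity constants `λ, Λ`, so the weak maximum principle
shows that a lower bound `w + 1 ≥ a` on `B_r(z)` propagates to `w + 1 ≥ c a` on `B_{3r}(z)`,
with `c = c(n, λ, Λ) ∈ (0, 1)`. Since `Γ` is `L`-Lipschitz, balls of radius `4r ≈ δ / (1 + L)`
centred on the vertical segment above `x₀` stay inside `C_1`; a chain of `N ≈ 1 + L` such balls
joins `x₀` to a ball inside `A_1`, where `w + 1 ≥ M + 1`, giving `w(x₀) + 1 ≥ c^{N+1} (M + 1)`.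
-/

open Set
open scoped Topology RealInnerProductSpace NNReal

theorem IsLocalMin.deriv_deriv_nonneg {f : ℝ → ℝ} {a : ℝ} (h : IsLocalMin f a)
    (hc : ContinuousAt f a) : 0 ≤ deriv (deriv f) a := by
  by_contra! hneg
  have hmax : IsLocalMax f a := isLocalMax_of_deriv_deriv_neg hneg h.deriv_eq_zero hc
  have hconst : f =ᶠ[𝓝 a] fun _ => f a := by
    filter_upwards [h, hmax] with t hmin hmax using le_antisymm hmax hmin
  have : deriv (deriv f) a = 0 := by
    rw [hconst.deriv.deriv_eq]
    simp
  exact hneg.ne this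

section SecondDerivative

variable {E F : Type*} [NormedAddCommGroup E] [NormedSpace ℝ E] [NormedAddCommGroup F]
  [NormedSpace ℝ F]

theorem IsLocalMin.second_derivative_nonneg {u : E → ℝ} {u' : E → E →L[ℝ] ℝ}
    {u'' : E →L[ℝ] E →L[ℝ] ℝ} {x : E} (h : IsLocalMin u x)
    (hu : ∀ᶠ y in 𝓝 x, HasFDerivAt u (u' y) y) (hu' : HasFDerivAt u' u'' x) (ξ : E) :
    0 ≤ u'' ξ ξ := by
  set γ : ℝ → E := fun t => x + t • ξ
  have hγ (t : ℝ) : HasDerivAt γ ξ t := by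
    have := ((hasDerivAt_id t).smul_const ξ).const_add x
    rwa [one_smul] at this
  have hγ0 : γ 0 = x := by simp [γ]
  have hγx : Tendsto γ (𝓝 0) (𝓝 x) := hγ0 ▸ (hγ 0).continuousAt.tendsto
  have hderiv : deriv (u ∘ γ) =ᶠ[𝓝 0] fun t => u' (γ t) ξ := by
    filter_upwards [hγx.eventually hu] with t ht using (ht.comp_hasDerivAt t (hγ t)).deriv
  have hderiv' : HasDerivAt (fun t => u' (γ t) ξ) (u'' ξ ξ) 0 :=
    (ContinuousLinearMap.apply ℝ ℝ ξ).hasFDerivAt.comp_hasDerivAt 0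
      ((hγ0 ▸ hu').comp_hasDerivAt 0 (hγ 0))
  have hmin : IsLocalMin (u ∘ γ) 0 := (hγ0 ▸ h).comp_continuous (hγ 0).continuousAt
  have hcont : ContinuousAt (u ∘ γ) 0 :=
    (hγ0 ▸ hu.self_of_nhds.continuousAt).comp (hγ 0).continuousAt
  simpa [hderiv.deriv_eq, hderiv'.deriv] using hmin.deriv_deriv_nonneg hcont

theorem ContDiffOn.eventually_hasFDerivAt {U : Set E} {u : E → F} {x : E} (hU : IsOpen U)
    (hu : ContDiffOn ℝ 2 u U) (hx : x ∈ U) : ∀ᶠ y in 𝓝 x, HasFDerivAt u (fderiv ℝ u y) y := by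
  filter_upwards [hU.mem_nhds hx] with y hy
  exact (hu.differentiableOn two_ne_zero y hy |>.differentiableAt (hU.mem_nhds hy)).hasFDerivAt

theorem ContDiffOn.hasFDerivAt_fderiv {U : Set E} {u : E → F} {x : E} (hU : IsOpen U)
    (hu : ContDiffOn ℝ 2 u U) (hx : x ∈ U) :
    HasFDerivAt (fderiv ℝ u) (fderiv ℝ (fderiv ℝ u) x) x :=
  ((hu.fderiv_of_isOpen hU (m := 1) (by norm_num)).differentiableOn one_ne_zero x hx
    |>.differentiableAt (hU.mem_nhds hx)).hasFDerivAt

end SecondDerivative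

section Hessian

variable {ι : Type*} [Fintype ι]

theorem EuclideanSpace.bilin_apply_eq_sum [DecidableEq ι]
    (T : EuclideanSpace ℝ ι →L[ℝ] EuclideanSpace ℝ ι →L[ℝ] ℝ) (ξ η : EuclideanSpace ℝ ι) :
    T ξ η = ∑ i, ∑ j, ξ i * η j * T (EuclideanSpace.single i 1) (EuclideanSpace.single j 1) := by
  conv_lhs => rw [← (EuclideanSpace.basisFun ι ℝ).sum_repr ξ,
    ← (EuclideanSpace.basisFun ι ℝ).sum_repr η]
  simp only [map_sum, map_smul, sum_apply, smul_apply, EuclideanSpace.basisFun_repr,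
    EuclideanSpace.basisFun_apply, smul_eq_mul, Finset.mul_sum]
  rw [Finset.sum_comm]
  exact Finset.sum_congr rfl fun i _ => Finset.sum_congr rfl fun j _ => by ring

theorem IsLocalMin.posSemidef_hessian [DecidableEq ι] {u : EuclideanSpace ℝ ι → ℝ}
    {u' : EuclideanSpace ℝ ι → EuclideanSpace ℝ ι →L[ℝ] ℝ}
    {u'' : EuclideanSpace ℝ ι →L[ℝ] EuclideanSpace ℝ ι →L[ℝ] ℝ} {x : EuclideanSpace ℝ ι}
    (h : IsLocalMin u x) (hu : ∀ᶠ y in 𝓝 x, HasFDerivAt u (u' y) y) (hu' : HasFDerivAt u' u'' x) :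
    (Matrix.of fun i j =>
      u'' (EuclideanSpace.single i 1) (EuclideanSpace.single j 1)).PosSemidef := by
  refine .of_dotProduct_mulVec_nonneg ?_ fun v => ?_
  · ext i j
    exact second_derivative_symmetric_of_eventually hu hu' _ _
  · have := h.second_derivative_nonneg hu hu' (WithLp.toLp 2 v)
    rw [EuclideanSpace.bilin_apply_eq_sum] at this
    simpa [dotProduct, Matrix.mulVec, Finset.mul_sum, mul_comm, mul_left_comm, mul_assoc] using this

theorem sum_mul_nonneg_of_posSemidef {A H : Matrix ι ι ℝ}
    (hA : ∀ v : ι → ℝ, 0 ≤ ∑ i, v i * ∑ j, A i j * v j) (hH : H.PosSemidef) :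
    0 ≤ ∑ i, ∑ j, A i j * H i j := by
  classical
  obtain ⟨B, rfl⟩ : ∃ B : Matrix ι ι ℝ, H = star B * B := by
    open MatrixOrder in exact CStarAlgebra.nonneg_iff_eq_star_mul_self.mp hH.nonneg
  calc (0 : ℝ) ≤ ∑ k, ∑ i, B k i * ∑ j, A i j * B k j :=
        Finset.sum_nonneg fun k _ => hA (B k)
    _ = ∑ i, ∑ j, A i j * (star B * B) i j := by
        simp only [Matrix.mul_apply, Matrix.star_apply, star_trivial, Finset.mul_sum]
        rw [Finset.sum_comm]
        refine Finset.sum_congr rfl fun i _ => ?_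
        rw [Finset.sum_comm]
        refine Finset.sum_congr rfl fun j _ => Finset.sum_congr rfl fun k _ => ?_
        ring

end Hessian

section NondivOperator

variable {m : ℕ} {A : Eucl m → Matrix (Fin m) (Fin m) ℝ}

/-- `tr(A(x) D²u(x))`, with the iterated partial derivatives used in `NondivSolution`. -/
def nondivOp (A : Eucl m → Matrix (Fin m) (Fin m) ℝ) (u : Eucl m → ℝ) (x : Eucl m) : ℝ :=
  ∑ i, ∑ j, A x i j *
    fderiv ℝ (fun y => fderiv ℝ u y (EuclideanSpace.single i 1)) x (EuclideanSpace.single j 1)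

theorem nondivOp_eq_sum_fderiv_fderiv {U : Set (Eucl m)} {u : Eucl m → ℝ} {x : Eucl m}
    (hU : IsOpen U) (hu : ContDiffOn ℝ 2 u U) (hx : x ∈ U) :
    nondivOp A u x = ∑ i, ∑ j, A x i j *
      fderiv ℝ (fderiv ℝ u) x (EuclideanSpace.single i 1) (EuclideanSpace.single j 1) := by
  have hu'' := hu.hasFDerivAt_fderiv hU hx
  refine Finset.sum_congr rfl fun i _ => Finset.sum_congr rfl fun j _ => ?_
  rw [fderiv_clm_apply hu''.differentiableAt (differentiableAt_const _),
    second_derivative_symmetric_of_eventually (hu.eventually_hasFDerivAt hU hx) hu'']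
  simp

theorem nondivOp_const_add_mul (u : Eucl m → ℝ) (α β : ℝ) (x : Eucl m) :
    nondivOp A (fun y => α + β * u y) x = β * nondivOp A u x := by
  have h1 : fderiv ℝ (fun y => α + β * u y) = fun y => β • fderiv ℝ u y := by
    funext y
    rw [fderiv_const_add]
    exact congrFun (fderiv_const_smul_field (f := u) β) y
  have h2 (v : Eucl m) : fderiv ℝ (fun y => fderiv ℝ (fun y => α + β * u y) y v) x
      = β • fderiv ℝ (fun y => fderiv ℝ u y v) x := by
    simp only [h1, smul_apply, smul_eq_mul]
    exact congrFun (fderiv_const_smul_field (f := fun y => fderiv ℝ u y v) β) x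
  simp only [nondivOp, h2, smul_apply, smul_eq_mul, Finset.mul_sum]
  exact Finset.sum_congr rfl fun i _ => Finset.sum_congr rfl fun j _ => by ring

theorem le_on_closure_of_nondivOp_lt {U Ω : Set (Eucl m)} {v ψ : Eucl m → ℝ}
    (hU : IsOpen U) (hv : ContDiffOn ℝ 2 v U) (hψ : ContDiffOn ℝ 2 ψ U)
    (hΩ : IsOpen Ω) (hΩb : Bornology.IsBounded Ω) (hΩU : closure Ω ⊆ U)
    (hA : ∀ x ∈ Ω, ∀ ξ : Eucl m, 0 ≤ ∑ i, ξ i * ∑ j, A x i j * ξ j)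
    (hlt : ∀ x ∈ Ω, nondivOp A v x < nondivOp A ψ x)
    (hbd : ∀ x ∈ closure Ω \ Ω, ψ x ≤ v x) :
    ∀ x ∈ closure Ω, ψ x ≤ v x := by
  by_contra! hneg
  obtain ⟨x, hx, hvx⟩ := hneg
  obtain ⟨z, hz, hmin⟩ := hΩb.isCompact_closure.exists_isMinOn ⟨x, hx⟩
    ((hv.sub hψ).continuousOn.mono hΩU)
  have hzΩ : z ∈ Ω := by
    by_contra hzΩ
    have : v z - ψ z ≤ v x - ψ x := hmin hx
    linarith [hbd z ⟨hz, hzΩ⟩]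
  have hzU : z ∈ U := hΩU (subset_closure hzΩ)
  have hloc : IsLocalMin (v - ψ) z :=
    hmin.isLocalMin (mem_of_superset (hΩ.mem_nhds hzΩ) subset_closure)
  have hderiv : ∀ᶠ y in 𝓝 z, HasFDerivAt (v - ψ) (fderiv ℝ v y - fderiv ℝ ψ y) y := by
    filter_upwards [hv.eventually_hasFDerivAt hU hzU, hψ.eventually_hasFDerivAt hU hzU]
      with y hvy hψy using hvy.sub hψy
  have hpsd := hloc.posSemidef_hessian hderiv
    ((hv.hasFDerivAt_fderiv hU hzU).sub (hψ.hasFDerivAt_fderiv hU hzU))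
  have hnonneg := sum_mul_nonneg_of_posSemidef (fun ξ => hA z hzΩ (WithLp.toLp 2 ξ)) hpsd
  have hlt' := hlt z hzΩ
  rw [nondivOp_eq_sum_fderiv_fderiv hU hv hzU, nondivOp_eq_sum_fderiv_fderiv hU hψ hzU] at hlt'
  simp only [Matrix.of_apply, sub_apply, mul_sub, Finset.sum_sub_distrib] at hnonneg
  linarith

end NondivOperator

section PowBarrier

variable {E : Type*} [NormedAddCommGroup E] (z : E) (q : ℝ)

def powBarrier (x : E) : ℝ := (‖x - z‖ ^ 2) ^ (-q)

theorem powBarrier_eq_mul {r : ℝ} (hr : 0 < r) (y : E) :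
    powBarrier z q y = (r ^ 2) ^ (-q) * ((dist y z / r) ^ 2) ^ (-q) := by
  rw [← Real.mul_rpow (by positivity) (by positivity), ← mul_pow, mul_div_cancel₀ _ hr.ne',
    powBarrier, dist_eq_norm]

variable [InnerProductSpace ℝ E]

theorem hasFDerivAt_norm_sub_sq (x : E) :
    HasFDerivAt (fun y => ‖y - z‖ ^ 2) (2 • innerSL ℝ (x - z)) x := by
  simpa using ((hasFDerivAt_id x).sub_const z).norm_sq

theorem contDiffOn_powBarrier : ContDiffOn ℝ 2 (powBarrier z q) {z}ᶜ := fun y hy =>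
  (((contDiff_norm_sq ℝ).comp (contDiff_id.sub contDiff_const)).contDiffAt.rpow_const_of_ne
    (by simpa [sub_eq_zero] using hy)).contDiffWithinAt

variable {z}

theorem fderiv_powBarrier_apply {x : E} (hx : x ≠ z) (v : E) :
    fderiv ℝ (powBarrier z q) x v = -2 * q * (‖x - z‖ ^ 2) ^ (-q - 1) * ⟪x - z, v⟫ := by
  have hs : ‖x - z‖ ^ 2 ≠ 0 := by simpa [sub_eq_zero] using hx
  have h : HasFDerivAt (powBarrier z q) _ x :=
    (hasFDerivAt_norm_sub_sq z x).rpow_const (Or.inl hs)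
  rw [h.fderiv]
  simp only [smul_apply, innerSL_apply_apply, smul_eq_mul]
  ring

theorem fderiv_fderiv_powBarrier_apply {x : E} (hx : x ≠ z) (v w : E) :
    fderiv ℝ (fun y => fderiv ℝ (powBarrier z q) y v) x w =
      -2 * q * (‖x - z‖ ^ 2) ^ (-q - 1) * ⟪v, w⟫
        + 4 * q * (q + 1) * (‖x - z‖ ^ 2) ^ (-q - 2) * ⟪x - z, v⟫ * ⟪x - z, w⟫ := by
  have hs : ‖x - z‖ ^ 2 ≠ 0 := by simpa [sub_eq_zero] using hx
  have hev : (fun y => fderiv ℝ (powBarrier z q) y v) =ᶠ[𝓝 x]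
      fun y => -2 * q * (‖y - z‖ ^ 2) ^ (-q - 1) * ⟪y - z, v⟫ := by
    filter_upwards [isOpen_ne.mem_nhds hx] with y hy using fderiv_powBarrier_apply q hy v
  have hpow := (hasFDerivAt_norm_sub_sq z x).rpow_const (p := -q - 1) (Or.inl hs)
  have hinner : HasFDerivAt (fun y => ⟪y - z, v⟫) (innerSL ℝ v) x := by
    refine ((innerSL ℝ v).hasFDerivAt.comp x ((hasFDerivAt_id x).sub_const z)).congr_of_eventuallyEq
      (Eventually.of_forall fun y => ?_)
    simp [real_inner_comm]
  rw [hev.fderiv_eq, ((hpow.const_mul (-2 * q)).fun_mul hinner).fderiv]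
  simp only [add_apply, smul_apply, innerSL_apply_apply, smul_eq_mul, nsmul_eq_mul]
  rw [show -q - 1 - 1 = -q - 2 by ring, real_inner_comm w v]
  ring

end PowBarrier

section Barrier

variable {m : ℕ} {lam Lam q : ℝ} {Ω : Set (Eucl m)} {A : Eucl m → Matrix (Fin m) (Fin m) ℝ}

theorem UnifElliptic.apply_self_le (hA : UnifElliptic lam Lam Ω A) {x : Eucl m} (hx : x ∈ Ω)
    (i : Fin m) : A x i i ≤ Lam := by
  have hcol := (hA x hx (EuclideanSpace.single i 1)).2
  simp only [PiLp.single_apply, mul_ite, mul_one, mul_zero, Finset.sum_ite_eq',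
    Finset.mem_univ, if_true, PiLp.norm_single, norm_one] at hcol
  calc A x i i ≤ |A x i i| := le_abs_self _
    _ = Real.sqrt (A x i i ^ 2) := (Real.sqrt_sq_eq_abs _).symm
    _ ≤ Real.sqrt (∑ k, A x k i ^ 2) :=
        Real.sqrt_le_sqrt <|
          Finset.single_le_sum (fun k _ => sq_nonneg (A x k i)) (Finset.mem_univ i)
    _ ≤ Lam := hcol

theorem nondivOp_powBarrier {x z : Eucl m} (hx : x ≠ z) :
    nondivOp A (powBarrier z q) x =
      -2 * q * (‖x - z‖ ^ 2) ^ (-q - 1) * ∑ i, A x i i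
        + 4 * q * (q + 1) * (‖x - z‖ ^ 2) ^ (-q - 2) *
          ∑ i, (x - z) i * ∑ j, A x i j * (x - z) j := by
  simp only [nondivOp, fderiv_fderiv_powBarrier_apply q hx, neg_mul,
    EuclideanSpace.inner_single_right, PiLp.single_apply, MonoidWithZeroHom.map_ite_one_zero,
    mul_ite, mul_one, mul_zero, mul_add, PiLp.sub_apply, Real.ringHom_apply, one_mul, mul_neg,
    Finset.sum_add_distrib, Finset.sum_ite_eq', Finset.mem_univ, ↓reduceIte,
    Finset.sum_neg_distrib, Finset.mul_sum]
  congr 1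
  · congr 1
    exact Finset.sum_congr rfl fun i _ => by ring
  · exact Finset.sum_congr rfl fun i _ => Finset.sum_congr rfl fun j _ => by ring

theorem nondivOp_powBarrier_pos (hA : UnifElliptic lam Lam Ω A) {x z : Eucl m} (hxΩ : x ∈ Ω)
    (hx : x ≠ z) (hq : 0 < q) (hqΛ : m * Lam < 2 * (q + 1) * lam) :
    0 < nondivOp A (powBarrier z q) x := by
  rw [nondivOp_powBarrier hx]
  set s := ‖x - z‖ ^ 2
  have hs : 0 < s := by positivity [sub_ne_zero.2 hx]
  have htrace : ∑ i, A x i i ≤ m * Lam := by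
    simpa using Finset.sum_le_sum fun i (_ : i ∈ Finset.univ) => hA.apply_self_le hxΩ i
  have hquad : lam * s ≤ ∑ i, (x - z) i * ∑ j, A x i j * (x - z) j := (hA x hxΩ (x - z)).1
  have hpow : s ^ (-q - 2) * s = s ^ (-q - 1) := by
    rw [← Real.rpow_add_one hs.ne']
    ring_nf
  have h1 := Real.rpow_pos_of_pos hs (-q - 1)
  have h2 := Real.rpow_pos_of_pos hs (-q - 2)
  calc (0 : ℝ) < 2 * q * s ^ (-q - 1) * (2 * (q + 1) * lam - m * Lam) := by
        have : 0 < 2 * (q + 1) * lam - m * Lam := by linarith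
        positivity
    _ = -2 * q * s ^ (-q - 1) * (m * Lam) + 4 * q * (q + 1) * s ^ (-q - 2) * (lam * s) := by
        rw [← hpow]; ring
    _ ≤ _ := by
        gcongr ?_ + ?_
        · nlinarith [mul_pos hq h1]
        · exact mul_le_mul_of_nonneg_left hquad (by positivity)

end Barrier

/-- The value at `|x - z| = 3r` of the barrier `|x - z|^{-2q}` normalized to be `1` on
`|x - z| = r` and `0` on `|x - z| = 4r`. -/
def growthConst (q : ℝ) : ℝ := (9 ^ (-q) - 16 ^ (-q)) / (1 - 16 ^ (-q))

theorem one_sub_rpow_neg_pos {x q : ℝ} (hx : 1 < x) (hq : 0 < q) : 0 < 1 - x ^ (-q) :=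
  sub_pos.2 (Real.rpow_lt_one_of_one_lt_of_neg hx (neg_lt_zero.2 hq))

theorem growthConst_pos {q : ℝ} (hq : 0 < q) : 0 < growthConst q := by
  have h : (16 : ℝ) ^ (-q) < 9 ^ (-q) :=
    Real.rpow_lt_rpow_of_neg (by norm_num) (by norm_num) (neg_lt_zero.2 hq)
  exact div_pos (by linarith) (one_sub_rpow_neg_pos (by norm_num) hq)

theorem growthConst_lt_one {q : ℝ} (hq : 0 < q) : growthConst q < 1 := by
  have h9 := one_sub_rpow_neg_pos (x := 9) (by norm_num) hq
  have h16 := one_sub_rpow_neg_pos (x := 16) (by norm_num) hq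
  rw [growthConst, div_lt_one h16]
  linarith

section AnnulusBarrier

variable {E : Type*} [NormedAddCommGroup E] {z y : E} {q r a b : ℝ}

def annulusBarrier (z : E) (q r a b : ℝ) (y : E) : ℝ :=
  b + a * (((dist y z / r) ^ 2) ^ (-q) - 16 ^ (-q)) / (1 - 16 ^ (-q))

theorem annulusBarrier_eq_const_add_mul (hr : 0 < r) :
    annulusBarrier z q r a b = fun y => (b - a * 16 ^ (-q) / (1 - 16 ^ (-q)))
      + a / ((1 - 16 ^ (-q)) * (r ^ 2) ^ (-q)) * powBarrier z q y := by
  funext y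
  have hP : (r ^ 2) ^ (-q) ≠ 0 := (Real.rpow_pos_of_pos (by positivity) _).ne'
  rw [annulusBarrier, powBarrier_eq_mul z q hr]
  by_cases hD : 1 - (16 : ℝ) ^ (-q) = 0
  · simp [hD]
  · field_simp
    ring

theorem annulusBarrier_of_dist_eq_inner (hr : r ≠ 0) (hq : 0 < q) (hy : dist y z = r) :
    annulusBarrier z q r a b y = b + a := by
  rw [annulusBarrier, hy, div_self hr, one_pow, Real.one_rpow, mul_div_assoc,
    div_self (one_sub_rpow_neg_pos (by norm_num) hq).ne', mul_one]

theorem annulusBarrier_of_dist_eq_outer (hr : r ≠ 0) (hy : dist y z = 4 * r) :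
    annulusBarrier z q r a b y = b := by
  rw [annulusBarrier, hy, mul_div_cancel_right₀ _ hr]
  norm_num

theorem add_growthConst_mul_le_annulusBarrier (hr : 0 < r) (hq : 0 < q) (ha : 0 ≤ a)
    (hy : 0 < dist y z) (hy' : dist y z ≤ 3 * r) :
    b + growthConst q * a ≤ annulusBarrier z q r a b y := by
  have hD := one_sub_rpow_neg_pos (x := 16) (by norm_num) hq
  have h9 : (9 : ℝ) ^ (-q) ≤ ((dist y z / r) ^ 2) ^ (-q) := by
    refine Real.rpow_le_rpow_of_nonpos (by positivity) ?_ (neg_nonpos.2 hq.le)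
    rw [div_pow, div_le_iff₀ (by positivity)]
    nlinarith
  rw [annulusBarrier, growthConst, add_le_add_iff_left, div_mul_eq_mul_div, mul_comm, mul_div_assoc,
    mul_div_assoc]
  gcongr

end AnnulusBarrier

theorem contDiffOn_annulusBarrier {E : Type*} [NormedAddCommGroup E] [InnerProductSpace ℝ E]
    {z : E} {q r a b : ℝ} (hr : 0 < r) : ContDiffOn ℝ 2 (annulusBarrier z q r a b) {z}ᶜ := by
  rw [annulusBarrier_eq_const_add_mul hr]
  exact contDiffOn_const.add (contDiffOn_const.mul (contDiffOn_powBarrier z q))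

theorem nondivOp_annulusBarrier_pos {m : ℕ} {lam Lam q r a b : ℝ} {Ω : Set (Eucl m)}
    {A : Eucl m → Matrix (Fin m) (Fin m) ℝ} {x z : Eucl m} (hA : UnifElliptic lam Lam Ω A)
    (hxΩ : x ∈ Ω) (hx : x ≠ z) (hq : 0 < q) (hqΛ : m * Lam < 2 * (q + 1) * lam) (hr : 0 < r)
    (ha : 0 < a) : 0 < nondivOp A (annulusBarrier z q r a b) x := by
  have hD := one_sub_rpow_neg_pos (x := 16) (by norm_num) hq
  rw [annulusBarrier_eq_const_add_mul hr, nondivOp_const_add_mul]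
  exact mul_pos (by positivity) (nondivOp_powBarrier_pos hA hxΩ hx hq hqΛ)

theorem closure_ball_sdiff_closedBall_subset {X : Type*} [PseudoMetricSpace X] (z : X) (r R : ℝ) :
    closure (ball z R \ closedBall z r) ⊆ closedBall z R \ ball z r :=
  closure_minimal (sdiff_subset_sdiff ball_subset_closedBall ball_subset_closedBall)
    (isClosed_closedBall.sdiff isOpen_ball)

theorem closure_ball_sdiff_closedBall_sdiff_subset {X : Type*} [PseudoMetricSpace X] (z : X)
    (r R : ℝ) :
    closure (ball z R \ closedBall z r) \ (ball z R \ closedBall z r) ⊆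
      sphere z r ∪ sphere z R := by
  rintro y ⟨hy, hyΩ⟩
  obtain ⟨hyR, hyr⟩ := closure_ball_sdiff_closedBall_subset z r R hy
  rw [mem_closedBall] at hyR
  rw [mem_ball, not_lt] at hyr
  rcases hyr.eq_or_lt with hyr | hyr
  · exact Or.inl hyr.symm
  · exact Or.inr (hyR.antisymm (not_lt.1 fun h => hyΩ ⟨h, by simpa using hyr⟩))

theorem harnack_step {m : ℕ} {lam Lam q b a r : ℝ} {U : Set (Eucl m)}
    {A : Eucl m → Matrix (Fin m) (Fin m) ℝ} {w : Eucl m → ℝ} {z : Eucl m}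
    (hU : IsOpen U) (hA : UnifElliptic lam Lam U A) (hlam : 0 ≤ lam) (hq : 0 < q)
    (hqΛ : m * Lam < 2 * (q + 1) * lam) (hw : NondivSolution A U w) (hwb : ∀ x ∈ U, b ≤ w x)
    (hr : 0 < r) (hball : closedBall z (4 * r) ⊆ U) (ha : 0 < a)
    (hwa : ∀ x ∈ closedBall z r, a ≤ w x - b) :
    ∀ x ∈ closedBall z (3 * r), growthConst q * a ≤ w x - b := by
  intro x hx
  by_cases hxr : dist x z ≤ r
  · nlinarith [hwa x (mem_closedBall.2 hxr), growthConst_lt_one hq]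
  rw [not_le] at hxr
  set Ω := ball z (4 * r) \ closedBall z r
  have hΩU : closure Ω ⊆ U ∩ {z}ᶜ := fun y hy =>
    have hy' := closure_ball_sdiff_closedBall_subset z r (4 * r) hy
    ⟨hball hy'.1, fun hyz => hy'.2 (by simp [mem_singleton_iff.1 hyz, hr])⟩
  have hcomp := le_on_closure_of_nondivOp_lt (Ω := Ω) (v := w) (ψ := annulusBarrier z q r a b)
    (hU.inter isOpen_compl_singleton) (hw.1.mono inter_subset_left)
    ((contDiffOn_annulusBarrier hr).mono inter_subset_right)
    (isOpen_ball.sdiff isClosed_closedBall) (isBounded_ball.subset sdiff_subset) hΩU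
    (fun y hy ξ => by nlinarith [(hA y (hΩU (subset_closure hy)).1 ξ).1, sq_nonneg ‖ξ‖])
    (fun y hy => by
      have hyW := hΩU (subset_closure hy)
      rw [show nondivOp A w y = 0 from hw.2 y hyW.1]
      exact nondivOp_annulusBarrier_pos hA hyW.1 hyW.2 hq hqΛ hr ha)
    (fun y hy => by
      rcases closure_ball_sdiff_closedBall_sdiff_subset z r (4 * r) hy with hy | hy
      · rw [annulusBarrier_of_dist_eq_inner hr.ne' hq hy]
        linarith [hwa y (sphere_subset_closedBall hy)]
      · rw [annulusBarrier_of_dist_eq_outer hr.ne' hy]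
        exact hwb y (hball (sphere_subset_closedBall hy)))
  have hxΩ : x ∈ Ω := ⟨mem_ball.2 (by linarith [mem_closedBall.1 hx]), by simpa using hxr⟩
  linarith [hcomp x (subset_closure hxΩ),
    add_growthConst_mul_le_annulusBarrier (b := b) hr hq ha.le (hr.trans hxr) (mem_closedBall.1 hx)]

theorem pow_mul_le_of_chain {X : Type*} [PseudoMetricSpace X] {U : Set X} {f : X → ℝ}
    {c r a : ℝ} (hc : 0 < c) (ha : 0 < a)
    (hstep : ∀ z a', 0 < a' → closedBall z (4 * r) ⊆ U → (∀ x ∈ closedBall z r, a' ≤ f x) →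
      ∀ x ∈ closedBall z (3 * r), c * a' ≤ f x)
    {N : ℕ} {z : ℕ → X} (hz : ∀ k < N, dist (z (k + 1)) (z k) ≤ 2 * r)
    (hball : ∀ k ≤ N, closedBall (z k) (4 * r) ⊆ U) (h0 : ∀ x ∈ closedBall (z 0) r, a ≤ f x) :
    ∀ x ∈ closedBall (z N) (3 * r), c ^ (N + 1) * a ≤ f x := by
  suffices ∀ k ≤ N, ∀ x ∈ closedBall (z k) (3 * r), c ^ (k + 1) * a ≤ f x from this N le_rfl
  intro k
  induction k with
  | zero => simpa using hstep (z 0) a ha (hball 0 (Nat.zero_le N)) h0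
  | succ k ih =>
    intro hk x hx
    rw [pow_succ', mul_assoc]
    refine hstep (z (k + 1)) _ (by positivity) (hball (k + 1) hk)
      (fun y hy => ih (by omega) y ?_) x hx
    rw [mem_closedBall] at hy ⊢
    linarith [dist_triangle y (z (k + 1)) (z k), hz k hk]

section Cylinder

variable {d : ℕ} {g : Eucl d → ℝ}

theorem ehead_sub (x y : Eucl (d + 1)) : ehead (x - y) = ehead x - ehead y := rfl

theorem norm_ehead_le (x : Eucl (d + 1)) : ‖ehead x‖ ≤ ‖x‖ := by
  simp only [EuclideanSpace.norm_eq, ehead]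
  gcongr
  rw [Fin.sum_univ_castSucc]
  exact le_add_of_nonneg_right (by positivity)

theorem lipschitzWith_ehead : LipschitzWith 1 (ehead : Eucl (d + 1) → Eucl d) :=
  LipschitzWith.of_dist_le_mul fun x y => by
    simpa [dist_eq_norm, ← ehead_sub] using norm_ehead_le (x - y)

theorem continuous_hG_on (hg : ContinuousOn g (ball 0 1)) :
    ContinuousOn (hG g) {x : Eucl (d + 1) | ‖ehead x‖ < 1} :=
  (EuclideanSpace.proj (Fin.last d)).continuous.continuousOn.sub
    (hg.comp lipschitzWith_ehead.continuous.continuousOn fun _ hx => mem_ball_zero_iff.2 hx)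

theorem isOpen_cylC (hg : ContinuousOn g (ball 0 1)) : IsOpen (cylC g 1 1) := by
  have : cylC g 1 1 = {x | ‖ehead x‖ < 1} ∩ hG g ⁻¹' Ioo 0 1 := by
    ext x
    simp [cylC]
  rw [this]
  exact (continuous_hG_on hg).isOpen_inter_preimage
    (isOpen_lt (continuous_norm.comp lipschitzWith_ehead.continuous) continuous_const) isOpen_Ioo

theorem abs_hG_sub_le {K : ℝ≥0} (hg : LipschitzOnWith K g (ball 0 1)) {x y : Eucl (d + 1)}
    (hx : ‖ehead x‖ < 1) (hy : ‖ehead y‖ < 1) :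
    |hG g y - hG g x| ≤ (1 + K) * dist y x := by
  have hlast : |elast (y - x)| ≤ dist y x := by
    simpa [dist_eq_norm, elast] using PiLp.norm_apply_le (y - x) (Fin.last d)
  have hhead : |g (ehead y) - g (ehead x)| ≤ K * dist y x := by
    simpa [← Real.dist_eq] using (hg.dist_le_mul _ (mem_ball_zero_iff.2 hy) _
      (mem_ball_zero_iff.2 hx)).trans (mul_le_mul_of_nonneg_left
        (by simpa using lipschitzWith_ehead.dist_le_mul y x) K.2)
  calc |hG g y - hG g x| = |elast (y - x) - (g (ehead y) - g (ehead x))| := by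
        simp only [hG, elast, PiLp.sub_apply]; ring_nf
    _ ≤ |elast (y - x)| + |g (ehead y) - g (ehead x)| := abs_sub _ _
    _ ≤ (1 + K) * dist y x := by linarith

theorem abs_hG_sub_le_of_mem_closedBall {K : ℝ≥0} (hg : LipschitzOnWith K g (ball 0 1))
    {x y : Eucl (d + 1)} {ρ : ℝ} (hx : ‖ehead x‖ + ρ < 1) (hy : y ∈ closedBall x ρ) :
    ‖ehead y‖ < 1 ∧ |hG g y - hG g x| ≤ (1 + K) * ρ := by
  have hyx := mem_closedBall.1 hy
  have hy1 : ‖ehead y‖ < 1 :=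
    calc ‖ehead y‖ ≤ ‖ehead x‖ + dist (ehead y) (ehead x) := by
          rw [dist_eq_norm]; exact norm_le_insert' _ _
      _ ≤ ‖ehead x‖ + ρ := by
          gcongr; simpa using (lipschitzWith_ehead.dist_le_mul y x).trans (by simpa using hyx)
      _ < 1 := hx
  refine ⟨hy1, (abs_hG_sub_le hg (by linarith [dist_nonneg (x := y) (y := x)]) hy1).trans ?_⟩
  gcongr

theorem ehead_add_smul_single (x : Eucl (d + 1)) (s : ℝ) :
    ehead (x + s • EuclideanSpace.single (Fin.last d) 1) = ehead x := by
  ext i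
  simp [ehead]

theorem hG_add_smul_single (x : Eucl (d + 1)) (s : ℝ) :
    hG g (x + s • EuclideanSpace.single (Fin.last d) 1) = hG g x + s := by
  rw [hG, hG, ehead_add_smul_single]
  simp only [elast, PiLp.add_apply, PiLp.smul_apply, PiLp.single_eq_same, smul_eq_mul, mul_one]
  ring

theorem dist_add_smul_single (x : Eucl (d + 1)) (s t : ℝ) :
    dist (x + s • EuclideanSpace.single (Fin.last d) 1)
      (x + t • EuclideanSpace.single (Fin.last d) 1) = |s - t| := by
  rw [dist_eq_norm, add_sub_add_left_eq_sub, ← sub_smul, norm_smul, PiLp.norm_single]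
  simp

end Cylinder

section HarnackChain

variable {d : ℕ} {g : Eucl d → ℝ}

/-- With `r = δ / (16 (1 + K))`, `chainLength K` steps of length `2r` climb the height `9δ/16`
that lifts `x₀ ∈ A_{1/2}` to the centre of a ball of radius `r` inside `A_1`. -/
def chainLength (K : ℝ) : ℕ := ⌈9 * (1 + K) / 2⌉₊

theorem exists_harnack_chain {K : ℝ≥0} (hg : LipschitzOnWith K g (ball 0 1)) {δ : ℝ}
    (hδ : 0 < δ) (hδ' : δ < 1 / 2) {x₀ : Eucl (d + 1)}
    (hx₀ : x₀ ∈ cylC g (1 / 2) (1 / 2) \ cylC g (1 / 2) (δ / 2)) :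
    ∃ r > 0, ∃ z : ℕ → Eucl (d + 1), z (chainLength K) = x₀ ∧
      (∀ k < chainLength K, dist (z (k + 1)) (z k) ≤ 2 * r) ∧
      (∀ k ≤ chainLength K, closedBall (z k) (4 * r) ⊆ cylC g 1 1) ∧
      closedBall (z 0) r ⊆ cylC g 1 1 \ cylC g 1 δ := by
  obtain ⟨⟨hx₀1, hx₀2, hx₀3⟩, hx₀4⟩ := hx₀
  have hx₀4 : δ / 2 ≤ hG g x₀ := not_lt.1 fun h => hx₀4 ⟨hx₀1, hx₀2, h⟩
  set N := chainLength K
  set r := δ / (16 * (1 + K))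
  have hK : (1 : ℝ) ≤ 1 + K := le_add_of_nonneg_right K.2
  have hr : 0 < r := by positivity
  have hKr : (1 + K) * r = δ / 16 := by simp only [r]; field_simp
  have hr16 : r ≤ δ / 16 := by nlinarith
  have hN : 9 * (1 + (K : ℝ)) / 2 ≤ N := Nat.le_ceil _
  have hN' : (N : ℝ) < 9 * (1 + K) / 2 + 1 := Nat.ceil_lt_add_one (by positivity)
  have h2rN : 9 * δ / 16 ≤ 2 * r * N := by nlinarith
  have h2rN' : 2 * r * N ≤ 11 * δ / 16 := by nlinarith
  set e : Eucl (d + 1) := EuclideanSpace.single (Fin.last d) 1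
  set z : ℕ → Eucl (d + 1) := fun k => x₀ + (2 * r * (N - k)) • e
  have hzhead (k : ℕ) : ‖ehead (z k)‖ < 1 / 2 := by simpa [z, e, ehead_add_smul_single] using hx₀1
  have hzh (k : ℕ) : hG g (z k) = hG g x₀ + 2 * r * (N - k) := hG_add_smul_single x₀ _
  have hball (k : ℕ) (hk : k ≤ N) (y : Eucl (d + 1)) (hy : y ∈ closedBall (z k) (4 * r)) :
      ‖ehead y‖ < 1 ∧ |hG g y - hG g (z k)| ≤ δ / 4 := by
    have := abs_hG_sub_le_of_mem_closedBall hg (by linarith [hzhead k]) hy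
    exact ⟨this.1, this.2.trans (by linarith)⟩
  refine ⟨r, hr, z, by simp [z], fun k _ => ?_, fun k hk y hy => ?_, fun y hy => ?_⟩
  · rw [dist_add_smul_single]
    push_cast
    rw [show 2 * r * (N - (k + 1)) - 2 * r * (N - k) = -(2 * r) by ring, abs_neg,
      abs_of_pos (by positivity)]
  · have hk' : (k : ℝ) ≤ N := by exact_mod_cast hk
    obtain ⟨hy1, hy2⟩ := hball k hk y hy
    rw [abs_le, hzh] at hy2
    exact ⟨hy1, by nlinarith, by nlinarith⟩
  · obtain ⟨hy1, hy2⟩ := hball 0 (Nat.zero_le N) y (closedBall_subset_closedBall (by linarith) hy)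
    have hy3 := (abs_hG_sub_le_of_mem_closedBall hg (by linarith [hzhead 0]) hy).2
    rw [abs_le, hzh] at hy2 hy3
    push_cast at hy2 hy3
    exact ⟨⟨hy1, by nlinarith, by nlinarith⟩, fun h => by nlinarith [h.2.2]⟩

end HarnackChain

theorem harnack_chain_lower_bound_general (d : ℕ) (lam Lam L : ℝ)
    (hlam : 0 < lam) (hlL : lam ≤ Lam)
    (δ : ℝ) (hδ : 0 < δ) (hδ' : δ < 1 / 2) :
    ∃ c : ℝ, 0 < c ∧ c < 1 ∧
      ∀ g : Eucl d → ℝ, g 0 = 0 →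
        (∀ x' ∈ ball (0 : Eucl d) 1, ∀ y' ∈ ball (0 : Eucl d) 1,
          |g x' - g y'| ≤ L * ‖x' - y'‖) →
        ∀ A : Eucl (d + 1) → Matrix (Fin (d + 1)) (Fin (d + 1)) ℝ,
          UnifElliptic lam Lam (cylC g 1 1) A →
          ∀ w : Eucl (d + 1) → ℝ, NondivSolution A (cylC g 1 1) w →
            (∀ x ∈ cylC g 1 1, -1 ≤ w x) →
            ∀ M : ℝ, 0 < M → (∀ x ∈ cylC g 1 1 \ cylC g 1 δ, M ≤ w x) →
            ∀ x₀ ∈ cylC g (1 / 2) (1 / 2) \ cylC g (1 / 2) (δ / 2),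
              (M + 1) * c - 1 ≤ w x₀ := by
  set q := (d + 1) * Lam / (2 * lam)
  have hq : 0 < q := by have := hlam.trans_le hlL; positivity
  have hqΛ : ((d + 1 : ℕ) : ℝ) * Lam < 2 * (q + 1) * lam := by
    simp only [q]; push_cast; field_simp; linarith
  have hc := growthConst_pos hq
  refine ⟨growthConst q ^ (chainLength L.toNNReal + 1), pow_pos hc _,
    pow_lt_one₀ hc.le (growthConst_lt_one hq) (Nat.succ_ne_zero _), ?_⟩
  intro g _ hg A hA w hw hw1 M hM hwM x₀ hx₀
  have hgK : LipschitzOnWith L.toNNReal g (ball 0 1) :=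
    LipschitzOnWith.of_dist_le_mul fun x hx y hy => by
      rw [Real.dist_eq, dist_eq_norm]
      exact (hg x hx y hy).trans (by gcongr; exact Real.le_coe_toNNReal L)
  obtain ⟨r, hr, z, rfl, hz, hball, htop⟩ := exists_harnack_chain hgK hδ hδ' hx₀
  have := pow_mul_le_of_chain (f := fun x => w x - -1) hc (by linarith : 0 < M - -1)
    (fun z a ha hz hza => harnack_step (isOpen_cylC hgK.continuousOn) hA hlam.le hq hqΛ hw hw1
      hr hz ha hza)
    hz hball (fun x hx => by linarith [hwM x (htop hx)]) _ (mem_closedBall_self (by positivity))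
  linarith

/-- **Harnack chain lower bound in Lipschitz cylinders** (inequality (2.3) in Step 1):
for every `δ ∈ (0,1/2)` there is `c ∈ (0,1)` depending only on `n, λ, Λ, L, δ` such
that if `w` solves `tr(A D²w) = 0` in `C_1`, `w ≥ -1` on `C_1` and `w ≥ M` on
`A_1 = C_1 \ C(1,δ)` for some `M > 0`, then `w(x₀) ≥ (M+1)c - 1` for every
`x₀ ∈ A_{1/2} = C_{1/2} \ C(1/2, δ/2)`. -/
theorem harnack_chain_lower_bound (d : ℕ) (hd : 1 ≤ d) (lam Lam L : ℝ)
    (hlam : 0 < lam) (hlL : lam ≤ Lam) (hL : 0 < L)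
    (δ : ℝ) (hδ : 0 < δ) (hδ' : δ < 1 / 2) :
    ∃ c : ℝ, 0 < c ∧ c < 1 ∧
      ∀ g : Eucl d → ℝ, g 0 = 0 →
        (∀ x' ∈ ball (0 : Eucl d) 1, ∀ y' ∈ ball (0 : Eucl d) 1,
          |g x' - g y'| ≤ L * ‖x' - y'‖) →
        ∀ A : Eucl (d + 1) → Matrix (Fin (d + 1)) (Fin (d + 1)) ℝ,
          UnifElliptic lam Lam (cylC g 1 1) A →
          ∀ w : Eucl (d + 1) → ℝ, NondivSolution A (cylC g 1 1) w →
            (∀ x ∈ cylC g 1 1, -1 ≤ w x) →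
            ∀ M : ℝ, 0 < M → (∀ x ∈ cylC g 1 1 \ cylC g 1 δ, M ≤ w x) →
            ∀ x₀ ∈ cylC g (1 / 2) (1 / 2) \ cylC g (1 / 2) (δ / 2),
              (M + 1) * c - 1 ≤ w x₀ :=
  harnack_chain_lower_bound_general d lam Lam L hlam hlL δ hδ hδ'
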